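/- Let A be a finite nonempty set of acts and let k ≥ 1. If S is an MmL-optimal subset of A of budget k, i.e. ∅ ≠ S ⊆ A with |S| ≤ k and MmL(S,A) ≤ MmL(T,A) for every nonempty T ⊆ A with |T| ≤ k, then S ∩ D_M(A) ≠ ∅. -/

import Mathlib

/-! Suppose no act of `S` is maximal. Dominance is a strict partial order (by subadditivity of `Ē`),
so each `a ∈ S` is dominated by some maximal `φ a ∈ A`, and `T = φ(S)` is an admissible competitor
disjoint from `S`. Since `Ē(b - φ a) ≤ Ē(b - a) + Ē(a - φ a) < Ē(b - a)`, every inner minimum for `T`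
is strictly below the corresponding one for `S`; and those inner minima are at most `MmL(S, A)`, because
the maximal acts of `T ⊆ A ∖ S` force `MmL(S, A) ≥ 0 = Ē(b - b)`. Hence `MmL(T, A) < MmL(S, A)`. -/

open Finset

/-- Upper expectation of `f` with respect to the set `P` of probability mass functions:
`Ē(f) = sup_{p ∈ P} ∑ ω, p ω * f ω` (the sup is attained when `P` is nonempty and compact). -/
noncomputable def upperExp {Ω : Type*} [Fintype Ω] (P : Set (Ω → ℝ)) (f : Ω → ℝ) : ℝ :=
  sSup ((fun p => ∑ ω, p ω * f ω) '' P)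

/-- `P` is a credal set: a nonempty compact set of probability mass functions on `Ω`. -/
def IsCredal {Ω : Type*} [Fintype Ω] (P : Set (Ω → ℝ)) : Prop :=
  P.Nonempty ∧ IsCompact P ∧ ∀ p ∈ P, (∀ ω, 0 ≤ p ω) ∧ ∑ ω, p ω = 1

/-- `a ≻ a'`: act `a` dominates act `a'`, i.e. `Ē(a' − a) < 0` (equivalently `E̲(a − a') > 0`). -/
def dominates {Ω : Type*} [Fintype Ω] (P : Set (Ω → ℝ)) (a a' : Ω → ℝ) : Prop :=
  upperExp P (a' - a) < 0

/-- `a` is a maximal act of `A`: `a ∈ A` and no `a' ∈ A` dominates `a`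
(membership in `D_M(A)`). -/
def maximalIn {Ω : Type*} [Fintype Ω] (P : Set (Ω → ℝ)) (A : Finset (Ω → ℝ))
    (a : Ω → ℝ) : Prop :=
  a ∈ A ∧ ∀ a' ∈ A, ¬ dominates P a' a

/-- `mML(S, A) = min_{a ∈ S} max_{a' ∈ A ∖ S} Ē(a' − a)`, valued in `EReal` so that the
maximum over the empty set is `−∞` (hence `mML(A, A) = −∞` when `S` is nonempty). -/
noncomputable def mML {Ω : Type*} [Fintype Ω] [DecidableEq (Ω → ℝ)]
    (P : Set (Ω → ℝ)) (S A : Finset (Ω → ℝ)) : EReal :=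
  S.inf fun a => (A \ S).sup fun a' => ((upperExp P (a' - a) : ℝ) : EReal)

/-- `MmL(S, A) = max_{a' ∈ A ∖ S} min_{a ∈ S} Ē(a' − a)`, valued in `EReal` so that the
maximum over the empty set is `−∞` (hence `MmL(A, A) = −∞`). -/
noncomputable def MmL {Ω : Type*} [Fintype Ω] [DecidableEq (Ω → ℝ)]
    (P : Set (Ω → ℝ)) (S A : Finset (Ω → ℝ)) : EReal :=
  (A \ S).sup fun a' => S.inf fun a => ((upperExp P (a' - a) : ℝ) : EReal)

section UpperExpectation

variable {Ω : Type*} [Fintype Ω] {P : Set (Ω → ℝ)}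

lemma bddAbove_expectations (hP : IsCompact P) (f : Ω → ℝ) :
    BddAbove ((fun p => ∑ ω, p ω * f ω) '' P) :=
  (hP.image (by fun_prop)).bddAbove

lemma expectation_le_upperExp (hP : IsCompact P) {p : Ω → ℝ} (hp : p ∈ P) (f : Ω → ℝ) :
    ∑ ω, p ω * f ω ≤ upperExp P f :=
  le_csSup (bddAbove_expectations hP f) ⟨p, hp, rfl⟩

@[simp]
lemma upperExp_zero : upperExp P (0 : Ω → ℝ) = 0 := by
  refine le_antisymm (Real.sSup_nonpos ?_) (Real.sSup_nonneg ?_) <;>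
    rintro _ ⟨p, -, rfl⟩ <;> simp

lemma upperExp_add_le (hP : IsCompact P) (f g : Ω → ℝ) :
    upperExp P (f + g) ≤ upperExp P f + upperExp P g := by
  rcases P.eq_empty_or_nonempty with rfl | hne
  · simp [upperExp]
  refine csSup_le (hne.image _) ?_
  rintro _ ⟨p, hp, rfl⟩
  simp only [Pi.add_apply, mul_add, Finset.sum_add_distrib]
  exact add_le_add (expectation_le_upperExp hP hp f) (expectation_le_upperExp hP hp g)

lemma upperExp_sub_le (hP : IsCompact P) (a b c : Ω → ℝ) :
    upperExp P (a - c) ≤ upperExp P (a - b) + upperExp P (b - c) := by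
  simpa using upperExp_add_le hP (a - b) (b - c)

end UpperExpectation

section Dominance

variable {Ω : Type*} [Fintype Ω] {P : Set (Ω → ℝ)}

lemma dominates_irrefl (a : Ω → ℝ) : ¬ dominates P a a := by
  simp [dominates]

lemma dominates_trans (hP : IsCompact P) {a b c : Ω → ℝ}
    (hab : dominates P a b) (hbc : dominates P b c) : dominates P a c := by
  unfold dominates at *
  linarith [upperExp_sub_le hP c b a]

lemma upperExp_sub_lt_of_dominates (hP : IsCompact P) {a m : Ω → ℝ}
    (hma : dominates P m a) (b : Ω → ℝ) : upperExp P (b - m) < upperExp P (b - a) := by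
  unfold dominates at hma
  linarith [upperExp_sub_le hP b a m]

lemma exists_maximalIn_dominates (hP : IsCompact P) {A : Finset (Ω → ℝ)} {a : Ω → ℝ}
    (ha : a ∈ A) (hna : ¬ maximalIn P A a) : ∃ m, maximalIn P A m ∧ dominates P m a := by
  have : IsStrictOrder (Ω → ℝ) (dominates P) :=
    { irrefl := dominates_irrefl, trans := fun _ _ _ => dominates_trans hP }
  obtain ⟨m₀, hm₀A, hm₀a⟩ : ∃ m ∈ A, dominates P m a := by
    simpa [maximalIn, ha] using hna
  have hwf := Set.wellFoundedOn_iff.1 (A.finite_toSet.wellFoundedOn (r := dominates P))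
  obtain ⟨m, ⟨hmA, hma⟩, hmin⟩ :=
    hwf.has_min {x | x ∈ A ∧ dominates P x a} ⟨m₀, hm₀A, hm₀a⟩
  refine ⟨m, ⟨hmA, fun b hbA hbm => ?_⟩, hma⟩
  exact hmin b ⟨hbA, dominates_trans hP hbm hma⟩ ⟨hbm, hbA, hmA⟩

end Dominance

section MinimaxLoss

variable {Ω : Type*} [Fintype Ω] [DecidableEq (Ω → ℝ)] {P : Set (Ω → ℝ)}
  {S A : Finset (Ω → ℝ)}

lemma MmL_nonneg_of_undominated {m : Ω → ℝ} (hm : m ∈ A \ S)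
    (hundom : ∀ a ∈ S, ¬ dominates P a m) : 0 ≤ MmL P S A := by
  refine le_trans ?_ (Finset.le_sup (f := fun a' => S.inf fun a =>
    ((upperExp P (a' - a) : ℝ) : EReal)) hm)
  refine Finset.le_inf fun a ha => EReal.coe_le_coe_iff.2 ?_
  simpa [dominates] using hundom a ha

lemma inf_upperExp_le_MmL (h0 : 0 ≤ MmL P S A) {b : Ω → ℝ} (hb : b ∈ A) :
    (S.inf fun a => ((upperExp P (b - a) : ℝ) : EReal)) ≤ MmL P S A := by
  by_cases hbS : b ∈ S
  · calc (S.inf fun a => ((upperExp P (b - a) : ℝ) : EReal))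
        ≤ ((upperExp P (b - b) : ℝ) : EReal) := Finset.inf_le hbS
      _ = 0 := by simp
      _ ≤ MmL P S A := h0
  · exact Finset.le_sup (f := fun a' => S.inf fun a => ((upperExp P (a' - a) : ℝ) : EReal))
      (Finset.mem_sdiff.2 ⟨hb, hbS⟩)

lemma inf_upperExp_image_lt (hP : IsCompact P) (hS : S.Nonempty) {φ : (Ω → ℝ) → Ω → ℝ}
    (hφ : ∀ a ∈ S, dominates P (φ a) a) (b : Ω → ℝ) :
    ((S.image φ).inf fun m => ((upperExp P (b - m) : ℝ) : EReal)) <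
      S.inf fun a => ((upperExp P (b - a) : ℝ) : EReal) := by
  obtain ⟨a, ha, hinf⟩ := S.exists_mem_eq_inf hS fun a => ((upperExp P (b - a) : ℝ) : EReal)
  rw [hinf]
  calc ((S.image φ).inf fun m => ((upperExp P (b - m) : ℝ) : EReal))
      ≤ ((upperExp P (b - φ a) : ℝ) : EReal) := Finset.inf_le (Finset.mem_image_of_mem φ ha)
    _ < ((upperExp P (b - a) : ℝ) : EReal) :=
      EReal.coe_lt_coe_iff.2 (upperExp_sub_lt_of_dominates hP (hφ a ha) b)

lemma MmL_image_lt (hP : IsCompact P) (hS : S.Nonempty) {φ : (Ω → ℝ) → Ω → ℝ}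
    (hφ : ∀ a ∈ S, dominates P (φ a) a) (h0 : 0 ≤ MmL P S A) :
    MmL P (S.image φ) A < MmL P S A := by
  refine (Finset.sup_lt_iff (EReal.bot_lt_zero.trans_le h0)).2 fun b hb => ?_
  exact (inf_upperExp_image_lt hP hS hφ b).trans_le
    (inf_upperExp_le_MmL h0 (Finset.mem_sdiff.1 hb).1)

end MinimaxLoss

theorem stmt12_general {Ω : Type*} [Fintype Ω] [DecidableEq (Ω → ℝ)]
    (P : Set (Ω → ℝ)) (hP : IsCredal P)
    (A : Finset (Ω → ℝ)) (k : ℕ)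
    (S : Finset (Ω → ℝ)) (hS : S.Nonempty) (hSA : S ⊆ A) (hScard : S.card ≤ k)
    (hopt : ∀ T : Finset (Ω → ℝ), T ⊆ A → T.Nonempty → T.card ≤ k → MmL P S A ≤ MmL P T A) :
    ∃ a ∈ S, maximalIn P A a := by
  by_contra! hnone
  choose! φ hφmax hφdom using fun a ha =>
    exists_maximalIn_dominates hP.2.1 (hSA ha) (hnone a ha)
  have ⟨a₀, ha₀⟩ := hS
  have h0 : 0 ≤ MmL P S A :=
    MmL_nonneg_of_undominated
      (Finset.mem_sdiff.2 ⟨(hφmax a₀ ha₀).1, fun h => hnone _ h (hφmax a₀ ha₀)⟩)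
      fun a ha => (hφmax a₀ ha₀).2 a (hSA ha)
  have hTA : S.image φ ⊆ A := Finset.image_subset_iff.2 fun a ha => (hφmax a ha).1
  exact (hopt _ hTA (hS.image φ) (Finset.card_image_le.trans hScard)).not_gt
    (MmL_image_lt hP.2.1 hS hφdom h0)

theorem stmt12 {Ω : Type*} [Fintype Ω] [Nonempty Ω] [DecidableEq (Ω → ℝ)]
    (P : Set (Ω → ℝ)) (hP : IsCredal P)
    (A : Finset (Ω → ℝ)) (hA : A.Nonempty) (k : ℕ) (hk : 1 ≤ k)
    (S : Finset (Ω → ℝ)) (hS : S.Nonempty) (hSA : S ⊆ A) (hScard : S.card ≤ k)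
    (hopt : ∀ T : Finset (Ω → ℝ), T ⊆ A → T.Nonempty → T.card ≤ k → MmL P S A ≤ MmL P T A) :
    ∃ a ∈ S, maximalIn P A a :=
  stmt12_general P hP A k S hS hSA hScard hopt
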